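/- Let Γ = ℤ ≀ ℤ be the restricted wreath product, i.e., the semidirect product (⊕_{i∈ℤ} ℤ) ⋊ ℤ where ℤ acts by shifting coordinates, with generating set X = {t, δ₀}, where t is a generator of the acting ℤ factor and δ₀ is the element of the direct sum supported at 0 with value 1. Then F_{Γ,X}(n) ≽ n^{1/4}: there exists a natural number M ≥ 1 such that ⌊n^{1/4}⌋ ≤ M · F_{Γ,X}(M·n) for all n ≥ 1 (inequality in ℕ∞). -/

import Mathlib

open scoped ENat

/-- `γ` is a product of at most `n` elements of `X ∪ X⁻¹`. -/
def wordLenLE {G : Type*} [Group G] (X : Set G) (γ : G) (n : ℕ) : Prop :=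
  ∃ w : List G, w.length ≤ n ∧ (∀ x ∈ w, x ∈ X ∨ x⁻¹ ∈ X) ∧ w.prod = γ

/-- `D^P_Γ(γ)`: the minimal cardinality of a finite quotient of `Γ` with property `P`
detecting `γ`. -/
noncomputable def DQuot {G : Type*} [Group G] (P : GrpCat.{0} → Prop) (γ : G) : ℕ∞ :=
  sInf {c : ℕ∞ | ∃ (Q : GrpCat.{0}) (φ : G →* ↥Q), Finite ↥Q ∧ P Q ∧
    Function.Surjective φ ∧ φ γ ≠ 1 ∧ c = (Nat.card ↥Q : ℕ∞)}

/-- `F^P_{Γ,X}(n)`: residual finiteness growth. -/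
noncomputable def FGrowth {G : Type*} [Group G] (P : GrpCat.{0} → Prop) (X : Set G) (n : ℕ) : ℕ∞ :=
  ⨆ (γ : G) (_ : γ ≠ 1) (_ : wordLenLE X γ n), DQuot P γ

def allFiniteClass : GrpCat.{0} → Prop := fun _ => True

def solvableClass : GrpCat.{0} → Prop := fun Q => IsSolvable ↥Q

def nilpotentClass : GrpCat.{0} → Prop := fun Q => Group.IsNilpotent ↥Q

/-- `F^P_{Γ,X}` is at most polynomial in `log n`. -/
def PolyLogBounded {G : Type*} [Group G] (P : GrpCat.{0} → Prop) (X : Set G) : Prop :=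
  ∃ M r : ℕ, 1 ≤ M ∧ ∀ n : ℕ, 1 ≤ n →
    FGrowth P X n ≤ ((M * ⌈Real.log (M * n) ^ r⌉₊ : ℕ) : ℕ∞)

def VirtuallyNilpotent (G : Type*) [Group G] : Prop :=
  ∃ H : Subgroup G, H.FiniteIndex ∧ Group.IsNilpotent H

/-- Shift-by-one automorphism of `ℤ →₀ A`. -/
noncomputable def shiftAut (A : Type*) [AddCommGroup A] : (ℤ →₀ A) ≃+ (ℤ →₀ A) :=
  Finsupp.domCongr (Equiv.addRight (1 : ℤ))

/-- The shift action of `ℤ` on the base group of the wreath product. -/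
noncomputable def shiftAction (A : Type*) [AddCommGroup A] :
    Multiplicative ℤ →* MulAut (Multiplicative (ℤ →₀ A)) :=
  zpowersHom _ (AddEquiv.toMultiplicative (shiftAut A))

/-- The restricted wreath product `A ≀ ℤ = (⊕_{i ∈ ℤ} A) ⋊ ℤ`, where `ℤ` acts by
shifting coordinates. -/
noncomputable abbrev WreathZ (A : Type*) [AddCommGroup A] : Type _ :=
  SemidirectProduct (Multiplicative (ℤ →₀ A)) (Multiplicative ℤ) (shiftAction A)

/-- The generator `t` of the acting `ℤ` factor. -/
noncomputable def tGen (A : Type*) [AddCommGroup A] : WreathZ A :=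
  SemidirectProduct.inr (Multiplicative.ofAdd (1 : ℤ))

/-- The element `δ₀` of the direct sum supported at `0` with value `a`. -/
noncomputable def deltaGen {A : Type*} [AddCommGroup A] (a : A) : WreathZ A :=
  SemidirectProduct.inl (Multiplicative.ofAdd (Finsupp.single (0 : ℤ) a))

/-! The element `γ = ∑_{i < D} ε_i δ_i` with all `ε_i ∈ {-1, 0, 1}` has word length at most `3D`.
Let `φ : ℤ ≀ ℤ → Q` be a finite quotient with `|Q| ≤ s`. The image `B` of the base group is
abelian and normal, of index `d` say, so `t ^ d ∈ B` commutes with `B` and `φ δ_i` depends only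
on `i mod d`. Hence `φ γ` is a product of the `φ δ_j` raised to the residue-class sums
`∑_{i ≡ j (d)} ε_i`, and it is trivial as soon as `|B|` divides all of them. As `d * |B| ≤ s`, it
suffices that `s!` divide every residue-class sum for every `d ≤ s`; comparing the `2 ^ D` vectors
in `{0, 1} ^ D` against the `(s!) ^ (s * s)` possible values of these sums modulo `s!` yields such
a nonzero `ε` for `D = s ^ 4 + 1`. With `s = ⌊n ^ (1/4)⌋` this gives `s ≤ F(6n)`. -/

section WordLength

variable {G : Type*} [Group G] {X : Set G} {x y : G} {m n : ℕ}

theorem wordLenLE.mono (h : wordLenLE X x m) (hmn : m ≤ n) : wordLenLE X x n :=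
  let ⟨w, hw, hwX, hprod⟩ := h
  ⟨w, hw.trans hmn, hwX, hprod⟩

theorem wordLenLE_one : wordLenLE X 1 0 :=
  ⟨[], le_rfl, by simp, rfl⟩

theorem wordLenLE_of_mem (hx : x ∈ X) : wordLenLE X x 1 :=
  ⟨[x], le_rfl, by simp [hx], by simp⟩

theorem wordLenLE.mul (hx : wordLenLE X x m) (hy : wordLenLE X y n) :
    wordLenLE X (x * y) (m + n) := by
  obtain ⟨v, hv, hvX, rfl⟩ := hx
  obtain ⟨w, hw, hwX, rfl⟩ := hy
  refine ⟨v ++ w, by simp only [List.length_append]; omega, ?_, List.prod_append⟩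
  rintro z hz
  rcases List.mem_append.mp hz with hz | hz
  exacts [hvX z hz, hwX z hz]

theorem wordLenLE.inv (hx : wordLenLE X x m) : wordLenLE X x⁻¹ m := by
  obtain ⟨w, hw, hwX, rfl⟩ := hx
  refine ⟨(w.map (·⁻¹)).reverse, by simpa using hw, ?_, (List.prod_inv_reverse w).symm⟩
  simp only [List.mem_reverse, List.mem_map]
  rintro _ ⟨z, hz, rfl⟩
  simpa [or_comm] using hwX z hz

theorem wordLenLE.pow (hx : wordLenLE X x m) (k : ℕ) : wordLenLE X (x ^ k) (k * m) := by
  induction k with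
  | zero => simpa using wordLenLE_one
  | succ k ih => simpa [pow_succ, add_mul] using ih.mul hx

theorem wordLenLE.zpow (hx : wordLenLE X x m) (z : ℤ) : wordLenLE X (x ^ z) (z.natAbs * m) := by
  obtain ⟨k, rfl | rfl⟩ := Int.eq_nat_or_neg z
  · simpa using hx.pow k
  · simpa using (hx.pow k).inv

end WordLength

section DetectingQuotients

variable {G : Type*} [Group G] {P : GrpCat.{0} → Prop} {γ : G}

theorem le_DQuot_of_forall_card_lt {c : ℕ}
    (h : ∀ (Q : GrpCat.{0}) (φ : G →* Q), Finite Q → P Q → Function.Surjective φ →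
      Nat.card Q < c → φ γ = 1) :
    (c : ℕ∞) ≤ DQuot P γ := by
  refine le_sInf ?_
  rintro _ ⟨Q, φ, hfin, hP, hsurj, hγ, rfl⟩
  by_contra! hlt
  exact hγ (h Q φ hfin hP hsurj (by exact_mod_cast hlt))

theorem DQuot_le_FGrowth {X : Set G} {n : ℕ} (hγ : γ ≠ 1) (hn : wordLenLE X γ n) :
    DQuot P γ ≤ FGrowth P X n :=
  le_iSup₂_of_le γ hγ (le_iSup_of_le hn le_rfl)

end DetectingQuotients

section Counting

theorem exists_ne_zero_natAbs_le_one_map_eq_zero {ι M : Type*} [Fintype ι] [AddCommGroup M]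
    [Fintype M] (f : (ι → ℤ) →+ M) (hcard : Fintype.card M < 2 ^ Fintype.card ι) :
    ∃ v : ι → ℤ, v ≠ 0 ∧ (∀ i, (v i).natAbs ≤ 1) ∧ f v = 0 := by
  classical
  let embed : (ι → Fin 2) → ι → ℤ := fun u i => (u i : ℤ)
  obtain ⟨u, w, huw, hf⟩ :=
    Fintype.exists_ne_map_eq_of_card_lt (f ∘ embed) (by simpa using hcard)
  refine ⟨embed u - embed w, fun h => ?_, fun i => ?_, by simpa [sub_eq_zero] using hf⟩
  · obtain ⟨i, hi⟩ := Function.ne_iff.mp huw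
    exact hi (Fin.ext (by simpa [embed, sub_eq_zero] using congrFun h i))
  · have := (u i).isLt
    have := (w i).isLt
    simp only [embed, Pi.sub_apply]
    omega

theorem factorial_pow_lt_two_pow (s : ℕ) : s.factorial ^ (s * s) < 2 ^ (s ^ 4 + 1) :=
  calc s.factorial ^ (s * s) ≤ ((2 ^ s) ^ s) ^ (s * s) := Nat.pow_le_pow_left
        ((Nat.factorial_le_pow s).trans (Nat.pow_le_pow_left Nat.lt_two_pow_self.le s)) _
    _ = 2 ^ s ^ 4 := by rw [← pow_mul, ← pow_mul]; ring_nf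
    _ < 2 ^ (s ^ 4 + 1) := Nat.pow_lt_pow_right one_lt_two (lt_add_one _)

theorem Finsupp.exists_eq_nsmul_of_forall_dvd {ι : Type*} (P : ι →₀ ℤ) (e : ℕ)
    (h : ∀ j, (e : ℤ) ∣ P j) : ∃ R, P = e • R :=
  ⟨P.mapRange (· / (e : ℤ)) (Int.zero_ediv _), by ext j; simp [Int.mul_ediv_cancel' (h j)]⟩

end Counting

namespace WreathZ

variable {A : Type*} [AddCommGroup A]

noncomputable def base (P : ℤ →₀ A) : WreathZ A :=
  SemidirectProduct.inl (Multiplicative.ofAdd P)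

theorem base_add (P R : ℤ →₀ A) : base (P + R) = base P * base R := by
  simp [base, ← map_mul, ← ofAdd_add]

theorem base_zsmul (z : ℤ) (P : ℤ →₀ A) : base (z • P) = base P ^ z := by
  simp [base, ← map_zpow, ← ofAdd_zsmul]

theorem base_nsmul (k : ℕ) (P : ℤ →₀ A) : base (k • P) = base P ^ k := by
  simp [base, ← map_pow, ← ofAdd_nsmul]

theorem base_eq_one_iff {P : ℤ →₀ A} : base P = 1 ↔ P = 0 := by
  rw [base, ← map_one SemidirectProduct.inl, SemidirectProduct.inl_injective.eq_iff, ofAdd_eq_one]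

theorem tGen_mul_base_single_mul_inv (i : ℤ) (a : A) :
    tGen A * base (Finsupp.single i a) * (tGen A)⁻¹ = base (Finsupp.single (i + 1) a) := by
  rw [tGen, base, base, ← map_inv, ← SemidirectProduct.inl_aut]
  congr 1
  simp [shiftAction, shiftAut]

theorem tGen_pow_mul_base_single_mul_inv (k : ℕ) (i : ℤ) (a : A) :
    tGen A ^ k * base (Finsupp.single i a) * (tGen A ^ k)⁻¹ = base (Finsupp.single (i + k) a) := by
  induction k with
  | zero => simp
  | succ k ih =>
    calc tGen A ^ (k + 1) * base (Finsupp.single i a) * (tGen A ^ (k + 1))⁻¹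
        = tGen A * (tGen A ^ k * base (Finsupp.single i a) * (tGen A ^ k)⁻¹) * (tGen A)⁻¹ := by
          group
      _ = base (Finsupp.single (i + (k + 1 : ℕ)) a) := by
          rw [ih, tGen_mul_base_single_mul_inv, Nat.cast_succ, add_assoc]

theorem wordLenLE_tGen (a : A) : wordLenLE {tGen A, deltaGen a} (tGen A) 1 :=
  wordLenLE_of_mem (Set.mem_insert _ _)

theorem wordLenLE_deltaGen (a : A) : wordLenLE {tGen A, deltaGen a} (deltaGen a) 1 :=
  wordLenLE_of_mem (Set.mem_insert_of_mem _ rfl)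

theorem deltaGen_one_zpow (z : ℤ) : deltaGen (1 : ℤ) ^ z = base (Finsupp.single 0 z) := by
  rw [← Finsupp.smul_single_one, base_zsmul]
  rfl

noncomputable def ofFinVec (D : ℕ) : (Fin D → A) →+ (ℤ →₀ A) :=
  ∑ i : Fin D, (Finsupp.singleAddHom ((i : ℕ) : ℤ)).comp (Pi.evalAddMonoidHom (fun _ => A) i)

theorem ofFinVec_apply {D : ℕ} (v : Fin D → A) :
    ofFinVec D v = ∑ i : Fin D, Finsupp.single ((i : ℕ) : ℤ) (v i) := by
  simp [ofFinVec]

theorem ofFinVec_apply_coe {D : ℕ} (v : Fin D → A) (i : Fin D) :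
    ofFinVec D v ((i : ℕ) : ℤ) = v i := by
  simp [ofFinVec_apply, Finsupp.finsetSum_apply, Finsupp.single_apply, Fin.val_inj]

theorem ofFinVec_injective (D : ℕ) : Function.Injective (ofFinVec D : (Fin D → A) → ℤ →₀ A) :=
  fun v w h => funext fun i => by rw [← ofFinVec_apply_coe v, h, ofFinVec_apply_coe]

theorem ofFinVec_succ {D : ℕ} (v : Fin (D + 1) → A) :
    ofFinVec (D + 1) v =
      ofFinVec D (v ∘ Fin.castSucc) + Finsupp.single (D : ℤ) (v (Fin.last D)) := by
  simp [ofFinVec_apply, Fin.sum_univ_castSucc]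

theorem wordLenLE_base_ofFinVec_mul_tGen_pow {D : ℕ} (v : Fin D → ℤ)
    (hv : ∀ i, (v i).natAbs ≤ 1) :
    wordLenLE {tGen ℤ, deltaGen (1 : ℤ)} (base (ofFinVec D v) * tGen ℤ ^ D) (2 * D) := by
  induction D with
  | zero => simpa [ofFinVec_apply, base] using wordLenLE_one
  | succ D ih =>
    have hcomm : tGen ℤ ^ D * deltaGen 1 ^ v (Fin.last D)
        = base (Finsupp.single D (v (Fin.last D))) * tGen ℤ ^ D := by
      rw [deltaGen_one_zpow, ← mul_inv_eq_iff_eq_mul, tGen_pow_mul_base_single_mul_inv, zero_add]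
    have hstep : base (ofFinVec (D + 1) v) * tGen ℤ ^ (D + 1)
        = base (ofFinVec D (v ∘ Fin.castSucc)) * tGen ℤ ^ D *
          (deltaGen 1 ^ v (Fin.last D) * tGen ℤ) := by
      rw [ofFinVec_succ, base_add, pow_succ, ← mul_assoc, mul_assoc _ _ (tGen ℤ ^ D), ← hcomm]
      simp only [mul_assoc]
    have hδ := ((wordLenLE_deltaGen (1 : ℤ)).zpow (v (Fin.last D))).mul
      (wordLenLE_tGen (1 : ℤ))
    rw [hstep]
    exact ((ih _ fun i => hv _).mul hδ).mono (by have := hv (Fin.last D); omega)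

theorem wordLenLE_base_ofFinVec {D : ℕ} (v : Fin D → ℤ) (hv : ∀ i, (v i).natAbs ≤ 1) :
    wordLenLE {tGen ℤ, deltaGen (1 : ℤ)} (base (ofFinVec D v)) (3 * D) := by
  have := (wordLenLE_base_ofFinVec_mul_tGen_pow v hv).mul
    ((wordLenLE_tGen (1 : ℤ)).pow D).inv
  rw [mul_inv_cancel_right] at this
  exact this.mono (by omega)

section FiniteQuotient

variable {Q : Type*} [Group Q] (φ : WreathZ A →* Q)

noncomputable def baseImage : Subgroup Q :=
  (φ.comp SemidirectProduct.inl).range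

instance : IsMulCommutative (baseImage φ) :=
  Subgroup.range_isMulCommutative _

theorem map_base_mem_baseImage (P : ℤ →₀ A) : φ (base P) ∈ baseImage φ :=
  ⟨_, rfl⟩

theorem baseImage_normal (hφ : Function.Surjective φ) : (baseImage φ).Normal := by
  rw [baseImage, MonoidHom.range_comp, SemidirectProduct.range_inl_eq_ker_rightHom]
  exact (MonoidHom.normal_ker _).map φ hφ

theorem map_base_card_nsmul (P : ℤ →₀ A) : φ (base (Nat.card (baseImage φ) • P)) = 1 := by
  rw [base_nsmul, map_pow]
  exact congrArg Subtype.val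
    (pow_card_eq_one' (x := (⟨_, map_base_mem_baseImage φ P⟩ : baseImage φ)))

variable {φ}

-- `t ^ index` lies in the normal abelian subgroup `baseImage φ`, so conjugating by it fixes
-- `baseImage φ` pointwise.
theorem periodic_map_base_single (hφ : Function.Surjective φ) (a : A) :
    Function.Periodic (fun i : ℤ => φ (base (Finsupp.single i a))) ((baseImage φ).index : ℤ) := by
  intro i
  have := baseImage_normal φ hφ
  dsimp only
  rw [← tGen_pow_mul_base_single_mul_inv, map_mul, map_mul, map_inv,
    setLike_mul_comm (map_pow φ _ _ ▸ (baseImage φ).pow_index_mem (φ (tGen A)))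
      (map_base_mem_baseImage φ _), mul_inv_cancel_right]

theorem map_base_mapDomain_emod (hφ : Function.Surjective φ) (P : ℤ →₀ A) :
    φ (base (P.mapDomain (· % ((baseImage φ).index : ℤ)))) = φ (base P) := by
  induction P using Finsupp.induction_linear with
  | zero => simp
  | add P R hP hR => rw [Finsupp.mapDomain_add, base_add, base_add, map_mul, map_mul, hP, hR]
  | single i a =>
    rw [Finsupp.mapDomain_single, Int.emod_def, mul_comm]
    exact (periodic_map_base_single hφ a).sub_int_mul_eq _

theorem exists_mul_eq_card_map_base_eq_one [Finite Q] (hφ : Function.Surjective φ) :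
    ∃ d e : ℕ, 0 < d ∧ 0 < e ∧ d * e = Nat.card Q ∧
      ∀ P R : ℤ →₀ A, P.mapDomain (· % (d : ℤ)) = e • R → φ (base P) = 1 :=
  ⟨(baseImage φ).index, Nat.card (baseImage φ),
    Nat.pos_of_ne_zero Subgroup.index_ne_zero_of_finite, Nat.card_pos,
    Subgroup.index_mul_card _, fun P R hPR => by
      rw [← map_base_mapDomain_emod hφ, hPR, map_base_card_nsmul]⟩

end FiniteQuotient

theorem succ_le_DQuot_base (s : ℕ) (P : ℤ →₀ ℤ)
    (hP : ∀ d : ℕ, 0 < d → d ≤ s → ∀ j, (s.factorial : ℤ) ∣ P.mapDomain (· % (d : ℤ)) j) :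
    ((s + 1 : ℕ) : ℕ∞) ≤ DQuot allFiniteClass (base P) := by
  refine le_DQuot_of_forall_card_lt fun Q φ hQ _ hφ hcard => ?_
  obtain ⟨d, e, hd, he, hde, hkill⟩ := exists_mul_eq_card_map_base_eq_one hφ
  have hds : d ≤ s := by nlinarith
  have hes : e ≤ s := by nlinarith
  obtain ⟨R, hR⟩ := (P.mapDomain (· % (d : ℤ))).exists_eq_nsmul_of_forall_dvd e fun j =>
    (Int.natCast_dvd_natCast.mpr (Nat.dvd_factorial he hes)).trans (hP d hd hds j)
  exact hkill P R hR

theorem exists_natAbs_le_one_factorial_dvd_mapDomain_emod (s : ℕ) :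
    ∃ v : Fin (s ^ 4 + 1) → ℤ, v ≠ 0 ∧ (∀ i, (v i).natAbs ≤ 1) ∧
      ∀ d : ℕ, 0 < d → d ≤ s → ∀ j,
        (s.factorial : ℤ) ∣ (ofFinVec _ v).mapDomain (· % (d : ℤ)) j := by
  have : NeZero s.factorial := ⟨s.factorial_ne_zero⟩
  let f : (Fin (s ^ 4 + 1) → ℤ) →+ (Fin s → Fin s → ZMod s.factorial) :=
    AddMonoidHom.pi fun d => AddMonoidHom.pi fun j => (Int.castAddHom _).comp <|
      (Finsupp.applyAddHom ((j : ℕ) : ℤ)).comp <|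
        (Finsupp.mapDomain.addMonoidHom (· % (((d : ℕ) + 1 : ℕ) : ℤ))).comp (ofFinVec _)
  obtain ⟨v, hv0, hv1, hfv⟩ :=
    exists_ne_zero_natAbs_le_one_map_eq_zero f
      (by simpa [pow_mul] using factorial_pow_lt_two_pow s)
  refine ⟨v, hv0, hv1, fun d hd hds j => ?_⟩
  -- `· % d` takes values in `[0, d)`, and these are exactly the coordinates recorded by `f`.
  by_cases hj : 0 ≤ j ∧ j < d
  · obtain ⟨k, rfl⟩ := Int.eq_ofNat_of_zero_le hj.1
    have := congrFun (congrFun hfv ⟨d - 1, by omega⟩) ⟨k, by omega⟩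
    simp only [f, AddMonoidHom.pi_apply, AddMonoidHom.comp_apply, Finsupp.applyAddHom_apply,
      Finsupp.mapDomain.addMonoidHom_apply, Int.coe_castAddHom, Pi.zero_apply,
      Nat.sub_add_cancel hd] at this
    exact (ZMod.intCast_zmod_eq_zero_iff_dvd _ _).mp this
  · rw [Finsupp.mapDomain_of_notMem_range]
    · exact dvd_zero _
    rintro ⟨i, rfl⟩
    exact hj ⟨Int.emod_nonneg _ (by omega), Int.emod_lt_of_pos _ (by omega)⟩

end WreathZ

theorem stmt16 :
    ∃ M : ℕ, 1 ≤ M ∧ ∀ n : ℕ, 1 ≤ n →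
      ((Nat.sqrt (Nat.sqrt n) : ℕ) : ℕ∞) ≤
        (M : ℕ∞) * FGrowth allFiniteClass
          ({tGen ℤ, deltaGen (1 : ℤ)} : Set (WreathZ ℤ)) (M * n) := by
  refine ⟨6, by norm_num, fun n hn => ?_⟩
  set s := Nat.sqrt (Nat.sqrt n)
  have hs : s ^ 4 ≤ n :=
    calc s ^ 4 = (s ^ 2) ^ 2 := by ring
      _ ≤ Nat.sqrt n ^ 2 := Nat.pow_le_pow_left (Nat.sqrt_le' _) 2
      _ ≤ n := Nat.sqrt_le' n
  obtain ⟨v, hv0, hv1, hdvd⟩ := WreathZ.exists_natAbs_le_one_factorial_dvd_mapDomain_emod s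
  set γ := WreathZ.base (WreathZ.ofFinVec _ v)
  have hγ : γ ≠ 1 :=
    WreathZ.base_eq_one_iff.not.mpr ((map_ne_zero_iff _ (WreathZ.ofFinVec_injective _)).mpr hv0)
  have hlen : wordLenLE {tGen ℤ, deltaGen (1 : ℤ)} γ (6 * n) :=
    (WreathZ.wordLenLE_base_ofFinVec v hv1).mono (by omega)
  calc (s : ℕ∞) ≤ ((s + 1 : ℕ) : ℕ∞) := by exact_mod_cast s.le_succ
    _ ≤ DQuot allFiniteClass γ := WreathZ.succ_le_DQuot_base s _ hdvd
    _ ≤ FGrowth allFiniteClass {tGen ℤ, deltaGen (1 : ℤ)} (6 * n) := DQuot_le_FGrowth hγ hlen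
    _ ≤ ((6 : ℕ) : ℕ∞) * FGrowth allFiniteClass {tGen ℤ, deltaGen (1 : ℤ)} (6 * n) :=
      le_mul_of_one_le_left' (by norm_num)
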